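/- For any real α > 0 and symmetric N×N matrices M_1, M_2, the Schatten norms satisfy |‖M_1‖_{S_α}^α − ‖M_2‖_{S_α}^α| ≤ α·‖M_1 − M_2‖_op·(‖M_1‖_{S_{α−1}}^{α−1} + ‖M_2‖_{S_{α−1}}^{α−1}) for α ≥ 1, using the ordering of eigenvalues on ℝ and Weyl's inequality. -/

import Mathlib

/-!
Weyl's inequality `|λⱼ(M₁) - λⱼ(M₂)| ≤ ‖M₁ - M₂‖` for eigenvalues sorted in the same order follows
from the Courant–Fischer dimension count. It reduces the claim to the termwise bound
`|a ^ α - b ^ α| ≤ α |a - b| (a ^ (α - 1) + b ^ (α - 1))` for `a, b ≥ 0`, which is the convexity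
of `t ↦ t ^ α`. Mathlib indexes the eigenvalues of a matrix by a fixed reindexing of the sorted
family `eigenvalues₀`, so both sums can be rewritten along the sorted index.
-/

/-- The ℓ²→ℓ² operator norm of a real N×N matrix. -/
noncomputable def opNorm {N : ℕ} (M : Matrix (Fin N) (Fin N) ℝ) : ℝ :=
  ‖(Matrix.toEuclideanCLM (𝕜 := ℝ) M : EuclideanSpace ℝ (Fin N) →L[ℝ] EuclideanSpace ℝ (Fin N))‖

open Module Submodule
open scoped InnerProductSpace

namespace Real

theorem rpow_sub_rpow_le_mul_rpow_sub_one {α x y : ℝ} (hα : 1 ≤ α) (hy : 0 ≤ y) (hyx : y ≤ x) :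
    x ^ α - y ^ α ≤ α * x ^ (α - 1) * (x - y) := by
  rcases hyx.eq_or_lt with rfl | hyx
  · simp
  have hslope := (convexOn_rpow hα).slope_le_of_hasDerivAt (Set.mem_Ici.2 hy)
    (Set.mem_Ici.2 (hy.trans hyx.le)) hyx (hasDerivAt_rpow_const (Or.inr hα))
  rwa [slope_def_field, div_le_iff₀ (sub_pos.2 hyx)] at hslope

theorem abs_rpow_sub_rpow_le {α x y : ℝ} (hα : 1 ≤ α) (hx : 0 ≤ x) (hy : 0 ≤ y) :
    |x ^ α - y ^ α| ≤ α * |x - y| * (x ^ (α - 1) + y ^ (α - 1)) := by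
  wlog hyx : y ≤ x generalizing x y
  · rw [abs_sub_comm, abs_sub_comm x, add_comm]
    exact this hy hx (le_of_not_ge hyx)
  calc |x ^ α - y ^ α| = x ^ α - y ^ α :=
        abs_of_nonneg (sub_nonneg.2 (rpow_le_rpow hy hyx (by linarith)))
    _ ≤ α * x ^ (α - 1) * (x - y) := rpow_sub_rpow_le_mul_rpow_sub_one hα hy hyx
    _ = α * |x - y| * x ^ (α - 1) := by rw [abs_of_nonneg (sub_nonneg.2 hyx)]; ring
    _ ≤ α * |x - y| * (x ^ (α - 1) + y ^ (α - 1)) := by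
        gcongr
        exact le_add_of_nonneg_right (rpow_nonneg hy _)

end Real

theorem abs_sum_abs_rpow_sub_sum_abs_rpow_le {ι : Type*} [Fintype ι] {α ε : ℝ} (hα : 1 ≤ α)
    {x y : ι → ℝ} (hxy : ∀ i, |x i - y i| ≤ ε) :
    |∑ i, |x i| ^ α - ∑ i, |y i| ^ α| ≤
      α * ε * (∑ i, |x i| ^ (α - 1) + ∑ i, |y i| ^ (α - 1)) := by
  rw [← Finset.sum_sub_distrib, ← Finset.sum_add_distrib, Finset.mul_sum]
  refine (Finset.abs_sum_le_sum_abs _ _).trans (Finset.sum_le_sum fun i _ => ?_)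
  calc _ ≤ α * |(|x i| - |y i|)| * (|x i| ^ (α - 1) + |y i| ^ (α - 1)) :=
        Real.abs_rpow_sub_rpow_le hα (abs_nonneg _) (abs_nonneg _)
    _ ≤ α * ε * (|x i| ^ (α - 1) + |y i| ^ (α - 1)) := by
        gcongr
        exact (abs_abs_sub_abs_le_abs_sub _ _).trans (hxy i)

namespace OrthonormalBasis

variable {ι 𝕜 E : Type*} [Fintype ι] [RCLike 𝕜] [NormedAddCommGroup E] [InnerProductSpace 𝕜 E]
  (b : OrthonormalBasis ι 𝕜 E)

theorem inner_eq_zero_of_mem_span_image {s : Set ι} {x : E} (hx : x ∈ span 𝕜 (b '' s)) {i : ι}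
    (hi : i ∉ s) : ⟪b i, x⟫_𝕜 = 0 := by
  obtain ⟨l, hl, rfl⟩ := Finsupp.mem_span_image_iff_linearCombination 𝕜 |>.mp hx
  rw [← inner_conj_symm, b.orthonormal.inner_finsupp_eq_zero hi hl, map_zero]

theorem finrank_span_image (s : Finset ι) : finrank 𝕜 (span 𝕜 (b '' s)) = s.card := by
  have hli : LinearIndependent 𝕜 (fun i : (s : Set ι) => b i) :=
    b.orthonormal.linearIndependent.comp _ Subtype.val_injective
  rw [Set.image_eq_range, finrank_span_eq_card hli]
  simp

end OrthonormalBasis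

namespace LinearMap.IsSymmetric

variable {𝕜 E : Type*} [RCLike 𝕜] [NormedAddCommGroup E] [InnerProductSpace 𝕜 E]
  [FiniteDimensional 𝕜 E] {T : E →ₗ[𝕜] E} {n : ℕ} (hT : T.IsSymmetric) (hn : finrank 𝕜 E = n)
include hT

theorem re_inner_apply_self_eq_sum (x : E) :
    RCLike.re ⟪T x, x⟫_𝕜 = ∑ i, hT.eigenvalues hn i * ‖⟪hT.eigenvectorBasis hn i, x⟫_𝕜‖ ^ 2 := by
  rw [← (hT.eigenvectorBasis hn).sum_inner_mul_inner, map_sum]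
  refine Finset.sum_congr rfl fun i _ => ?_
  rw [hT, apply_eigenvectorBasis, inner_smul_right, mul_assoc, RCLike.re_ofReal_mul,
    inner_mul_symm_re_eq_norm, norm_mul, norm_inner_symm, sq]

theorem mul_norm_sq_le_re_inner_of_mem_span {s : Set (Fin n)} {c : ℝ}
    (hc : ∀ i ∈ s, c ≤ hT.eigenvalues hn i) {x : E}
    (hx : x ∈ span 𝕜 (hT.eigenvectorBasis hn '' s)) : c * ‖x‖ ^ 2 ≤ RCLike.re ⟪T x, x⟫_𝕜 := by
  rw [hT.re_inner_apply_self_eq_sum hn, ← (hT.eigenvectorBasis hn).sum_sq_norm_inner_right,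
    Finset.mul_sum]
  refine Finset.sum_le_sum fun i _ => ?_
  by_cases hi : i ∈ s
  · exact mul_le_mul_of_nonneg_right (hc i hi) (by positivity)
  · simp [(hT.eigenvectorBasis hn).inner_eq_zero_of_mem_span_image hx hi]

theorem re_inner_le_mul_norm_sq_of_mem_span {s : Set (Fin n)} {c : ℝ}
    (hc : ∀ i ∈ s, hT.eigenvalues hn i ≤ c) {x : E}
    (hx : x ∈ span 𝕜 (hT.eigenvectorBasis hn '' s)) : RCLike.re ⟪T x, x⟫_𝕜 ≤ c * ‖x‖ ^ 2 := by
  rw [hT.re_inner_apply_self_eq_sum hn, ← (hT.eigenvectorBasis hn).sum_sq_norm_inner_right,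
    Finset.mul_sum]
  refine Finset.sum_le_sum fun i _ => ?_
  by_cases hi : i ∈ s
  · exact mul_le_mul_of_nonneg_right (hc i hi) (by positivity)
  · simp [(hT.eigenvectorBasis hn).inner_eq_zero_of_mem_span_image hx hi]

theorem eigenvalues_le_add_of_re_inner_le {S : E →ₗ[𝕜] E} (hS : S.IsSymmetric) {c : ℝ}
    (hc : ∀ x, RCLike.re ⟪T x, x⟫_𝕜 ≤ RCLike.re ⟪S x, x⟫_𝕜 + c * ‖x‖ ^ 2) (j : Fin n) :
    hT.eigenvalues hn j ≤ hS.eigenvalues hn j + c := by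
  set V := span 𝕜 (hT.eigenvectorBasis hn '' (Finset.Iic j : Finset (Fin n)))
  set W := span 𝕜 (hS.eigenvectorBasis hn '' (Finset.Ici j : Finset (Fin n)))
  -- Courant–Fischer: `V` has dimension `j + 1` and `W` dimension `n - j`, so they meet.
  have hVW : ¬Disjoint V W := by
    intro h
    have := Submodule.finrank_add_finrank_le_of_disjoint h
    rw [(hT.eigenvectorBasis hn).finrank_span_image, (hS.eigenvectorBasis hn).finrank_span_image,
      Fin.card_Iic, Fin.card_Ici, hn] at this
    omega
  obtain ⟨x, hxV, hxW, hx⟩ : ∃ x ∈ V, x ∈ W ∧ x ≠ 0 := by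
    simpa [Submodule.disjoint_def] using hVW
  have hT_ge : hT.eigenvalues hn j * ‖x‖ ^ 2 ≤ RCLike.re ⟪T x, x⟫_𝕜 :=
    hT.mul_norm_sq_le_re_inner_of_mem_span hn
      (fun i hi => hT.eigenvalues_antitone hn (Finset.mem_Iic.mp hi)) hxV
  have hS_le : RCLike.re ⟪S x, x⟫_𝕜 ≤ hS.eigenvalues hn j * ‖x‖ ^ 2 :=
    hS.re_inner_le_mul_norm_sq_of_mem_span hn
      (fun i hi => hS.eigenvalues_antitone hn (Finset.mem_Ici.mp hi)) hxW
  refine le_of_mul_le_mul_right ?_ (by positivity : 0 < ‖x‖ ^ 2)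
  calc hT.eigenvalues hn j * ‖x‖ ^ 2 ≤ RCLike.re ⟪S x, x⟫_𝕜 + c * ‖x‖ ^ 2 := hT_ge.trans (hc x)
    _ ≤ (hS.eigenvalues hn j + c) * ‖x‖ ^ 2 := by linarith

end LinearMap.IsSymmetric

namespace ContinuousLinearMap

variable {𝕜 E : Type*} [RCLike 𝕜] [NormedAddCommGroup E] [InnerProductSpace 𝕜 E]

theorem re_inner_apply_self_le (T : E →L[𝕜] E) (x : E) : RCLike.re ⟪T x, x⟫_𝕜 ≤ ‖T‖ * ‖x‖ ^ 2 :=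
  calc RCLike.re ⟪T x, x⟫_𝕜 ≤ ‖T x‖ * ‖x‖ := re_inner_le_norm _ _
    _ ≤ ‖T‖ * ‖x‖ * ‖x‖ := by gcongr; exact T.le_opNorm x
    _ = ‖T‖ * ‖x‖ ^ 2 := by ring

theorem re_inner_apply_self_le_add (T S : E →L[𝕜] E) (x : E) :
    RCLike.re ⟪T x, x⟫_𝕜 ≤ RCLike.re ⟪S x, x⟫_𝕜 + ‖T - S‖ * ‖x‖ ^ 2 := by
  have := (T - S).re_inner_apply_self_le x
  rw [sub_apply, inner_sub_left, map_sub] at this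
  linarith

end ContinuousLinearMap

namespace Matrix.IsHermitian

variable {𝕜 n : Type*} [RCLike 𝕜] [Fintype n] [DecidableEq n] {A B : Matrix n n 𝕜}

theorem eigenvalues₀_le_add (hA : A.IsHermitian) (hB : B.IsHermitian) (k : Fin (Fintype.card n)) :
    hA.eigenvalues₀ k ≤ hB.eigenvalues₀ k + ‖toEuclideanCLM (n := n) (𝕜 := 𝕜) (A - B)‖ := by
  refine LinearMap.IsSymmetric.eigenvalues_le_add_of_re_inner_le _ _ _ (fun x => ?_) k
  rw [map_sub]
  exact (toEuclideanCLM (n := n) (𝕜 := 𝕜) A).re_inner_apply_self_le_add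
    (toEuclideanCLM (n := n) (𝕜 := 𝕜) B) x

theorem abs_eigenvalues₀_sub_le (hA : A.IsHermitian) (hB : B.IsHermitian)
    (k : Fin (Fintype.card n)) :
    |hA.eigenvalues₀ k - hB.eigenvalues₀ k| ≤ ‖toEuclideanCLM (n := n) (𝕜 := 𝕜) (A - B)‖ := by
  refine abs_sub_le_iff.2 ⟨sub_le_iff_le_add'.2 (hA.eigenvalues₀_le_add hB k),
    sub_le_iff_le_add'.2 ?_⟩
  rw [map_sub, norm_sub_rev, ← map_sub]
  exact hB.eigenvalues₀_le_add hA k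

theorem sum_eigenvalues_eq (hA : A.IsHermitian) {M : Type*} [AddCommMonoid M] (f : ℝ → M) :
    ∑ i, f (hA.eigenvalues i) = ∑ k, f (hA.eigenvalues₀ k) :=
  (Fintype.equivOfCardEq (Fintype.card_fin _)).symm.sum_comp (fun k => f (hA.eigenvalues₀ k))

end Matrix.IsHermitian

/-- for real `α ≥ 1` and symmetric matrices `M₁, M₂`,
`|‖M₁‖_{S_α}^α − ‖M₂‖_{S_α}^α| ≤ α‖M₁−M₂‖_op(‖M₁‖_{S_{α−1}}^{α−1} + ‖M₂‖_{S_{α−1}}^{α−1})`,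
where `‖M‖_{S_β}^β = Σ_j |λ_j(M)|^β`. -/
theorem schatten_pow_diff_le {N : ℕ} (M₁ M₂ : Matrix (Fin N) (Fin N) ℝ)
    (h₁ : M₁.IsHermitian) (h₂ : M₂.IsHermitian) (α : ℝ) (hα : 1 ≤ α) :
    |(∑ j, |h₁.eigenvalues j| ^ α) - ∑ j, |h₂.eigenvalues j| ^ α| ≤
      α * opNorm (M₁ - M₂) *
        ((∑ j, |h₁.eigenvalues j| ^ (α - 1)) + ∑ j, |h₂.eigenvalues j| ^ (α - 1)) := by
  rw [h₁.sum_eigenvalues_eq (|·| ^ α), h₂.sum_eigenvalues_eq (|·| ^ α),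
    h₁.sum_eigenvalues_eq (|·| ^ (α - 1)), h₂.sum_eigenvalues_eq (|·| ^ (α - 1))]
  exact abs_sum_abs_rpow_sub_sum_abs_rpow_le hα (h₁.abs_eigenvalues₀_sub_le h₂)
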